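/- Let P be a nonempty finite set of points in the Euclidean plane, let k ≥ 2 be an integer, let p₀ be the point of sky(P) with smallest x-coordinate and q₀ the point of sky(P) with largest x-coordinate. Let c₁ = p₀, c₂ = q₀, and for i = 3, …, k let cᵢ ∈ sky(P) be a point maximizing min_{j < i} d(p, cⱼ) over p ∈ sky(P). Then the set C = {c₁, …, c_k} satisfies ψ(C, P) ≤ 2 · opt(P,k); that is, the farthest-point construction started from the two extreme skyline points yields a 2-approximation to the distance-based representative skyline problem. -/
import Mathlib


abbrev Pt : Type := EuclideanSpace ℝ (Fin 2)

open Classical in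
noncomputable def sky (P : Finset Pt) : Finset Pt :=
  P.filter (fun p => ∀ q ∈ P, q ≠ p → q 0 < p 0 ∨ q 1 < p 1)

noncomputable def psi (Q P : Finset Pt) : ℝ :=
  sSup {r : ℝ | ∃ p ∈ sky P, r = sInf {s : ℝ | ∃ q ∈ Q, s = dist p q}}

noncomputable def optk (P : Finset Pt) (k : ℕ) : ℝ :=
  sInf {r : ℝ | ∃ Q : Finset Pt, Q ⊆ sky P ∧ Q.Nonempty ∧ Q.card ≤ k ∧ r = psi Q P}

lemma distS_eq (p : Pt) (Q : Finset Pt) :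
    {s : ℝ | ∃ q ∈ Q, s = dist p q} = (fun q => dist p q) '' ↑Q := by
  ext s; simp [eq_comm]

lemma distS_finite (p : Pt) (Q : Finset Pt) :
    {s : ℝ | ∃ q ∈ Q, s = dist p q}.Finite := by
  rw [distS_eq]; exact Q.finite_toSet.image _

lemma sInf_dist_le {p : Pt} {Q : Finset Pt} {q : Pt} (hq : q ∈ Q) :
    sInf {s : ℝ | ∃ q ∈ Q, s = dist p q} ≤ dist p q :=
  csInf_le (distS_finite p Q).bddBelow ⟨q, hq, rfl⟩

lemma exists_sInf_dist {p : Pt} {Q : Finset Pt} (hQ : Q.Nonempty) :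
    ∃ q ∈ Q, sInf {s : ℝ | ∃ q ∈ Q, s = dist p q} = dist p q := by
  have hne : {s : ℝ | ∃ q ∈ Q, s = dist p q}.Nonempty :=
    ⟨dist p hQ.choose, hQ.choose, hQ.choose_spec, rfl⟩
  exact hne.csInf_mem (distS_finite p Q)

lemma psiS_eq (Q P : Finset Pt) :
    {r : ℝ | ∃ p ∈ sky P, r = sInf {s : ℝ | ∃ q ∈ Q, s = dist p q}} =
      (fun p => sInf {s : ℝ | ∃ q ∈ Q, s = dist p q}) '' ↑(sky P) := by
  ext r; simp [eq_comm]

lemma psiS_finite (Q P : Finset Pt) :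
    {r : ℝ | ∃ p ∈ sky P, r = sInf {s : ℝ | ∃ q ∈ Q, s = dist p q}}.Finite := by
  rw [psiS_eq]; exact (sky P).finite_toSet.image _

lemma le_psi {Q P : Finset Pt} {p : Pt} (hp : p ∈ sky P) :
    sInf {s : ℝ | ∃ q ∈ Q, s = dist p q} ≤ psi Q P :=
  le_csSup (psiS_finite Q P).bddAbove ⟨p, hp, rfl⟩

lemma exists_psi (Q : Finset Pt) {P : Finset Pt} (h : (sky P).Nonempty) :
    ∃ p ∈ sky P, psi Q P = sInf {s : ℝ | ∃ q ∈ Q, s = dist p q} := by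
  have hne : {r : ℝ | ∃ p ∈ sky P, r = sInf {s : ℝ | ∃ q ∈ Q, s = dist p q}}.Nonempty :=
    ⟨_, h.choose, h.choose_spec, rfl⟩
  exact hne.csSup_mem (psiS_finite Q P)

lemma optk_attained {P : Finset Pt} {k : ℕ} {p : Pt} (hp : p ∈ sky P) (hk : 1 ≤ k) :
    ∃ Q : Finset Pt, Q ⊆ sky P ∧ Q.Nonempty ∧ Q.card ≤ k ∧ optk P k = psi Q P := by
  have hfin : {r : ℝ | ∃ Q : Finset Pt, Q ⊆ sky P ∧ Q.Nonempty ∧ Q.card ≤ k ∧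
      r = psi Q P}.Finite := by
    apply Set.Finite.subset (((sky P).powerset.finite_toSet.image (fun Q => psi Q P)))
    rintro r ⟨Q, hQ, -, -, rfl⟩
    exact ⟨Q, by simpa [Finset.mem_powerset] using hQ, rfl⟩
  have hne : {r : ℝ | ∃ Q : Finset Pt, Q ⊆ sky P ∧ Q.Nonempty ∧ Q.card ≤ k ∧
      r = psi Q P}.Nonempty :=
    ⟨psi {p} P, {p}, by simpa using hp, Finset.singleton_nonempty p,
      by simpa using hk, rfl⟩
  exact hne.csInf_mem hfin

lemma sky_mono {P : Finset Pt} {a b : Pt} (ha : a ∈ sky P) (hb : b ∈ sky P)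
    (h : a 0 ≤ b 0) : b 1 ≤ a 1 := by
  by_cases hab : b = a
  · rw [hab]
  · simp only [sky, Finset.mem_filter] at ha hb
    rcases ha.2 b hb.1 hab with h' | h'
    · linarith
    · linarith

lemma dist_le_diam {P : Finset Pt} {p₀ q₀ : Pt} (hp₀ : p₀ ∈ sky P)
    (hp₀min : ∀ q ∈ sky P, p₀ 0 ≤ q 0) (hq₀ : q₀ ∈ sky P)
    (hq₀max : ∀ q ∈ sky P, q 0 ≤ q₀ 0) {a b : Pt} (ha : a ∈ sky P) (hb : b ∈ sky P) :
    dist a b ≤ dist p₀ q₀ := by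
  have hax := hp₀min a ha
  have hbx := hp₀min b hb
  have hax' := hq₀max a ha
  have hbx' := hq₀max b hb
  have hay : a 1 ≤ p₀ 1 := sky_mono hp₀ ha hax
  have hby : b 1 ≤ p₀ 1 := sky_mono hp₀ hb hbx
  have hay' : q₀ 1 ≤ a 1 := sky_mono ha hq₀ hax'
  have hby' : q₀ 1 ≤ b 1 := sky_mono hb hq₀ hbx'
  rw [EuclideanSpace.dist_eq, EuclideanSpace.dist_eq]
  apply Real.sqrt_le_sqrt
  simp only [Fin.sum_univ_two, Real.dist_eq, sq_abs]
  have h1 : (a 0 - b 0) ^ 2 ≤ (p₀ 0 - q₀ 0) ^ 2 := by nlinarith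
  have h2 : (a 1 - b 1) ^ 2 ≤ (p₀ 1 - q₀ 1) ^ 2 := by nlinarith
  linarith

open Classical in
theorem stmt19 (P : Finset Pt) (hP : P.Nonempty) (k : ℕ) (hk : 2 ≤ k)
    (p₀ : Pt) (hp₀ : p₀ ∈ sky P) (hp₀min : ∀ q ∈ sky P, p₀ 0 ≤ q 0)
    (q₀ : Pt) (hq₀ : q₀ ∈ sky P) (hq₀max : ∀ q ∈ sky P, q 0 ≤ q₀ 0)
    (c : ℕ → Pt) (hc1 : c 1 = p₀) (hc2 : c 2 = q₀)
    (hmem : ∀ i, 3 ≤ i → i ≤ k → c i ∈ sky P)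
    (hfarthest : ∀ i, 3 ≤ i → i ≤ k → ∀ p ∈ sky P,
      ∃ j, 1 ≤ j ∧ j < i ∧
        ∀ j', 1 ≤ j' → j' < i → dist p (c j) ≤ dist (c i) (c j')) :
    psi ((Finset.Icc 1 k).image c) P ≤ 2 * optk P k := by
  have hskyne : (sky P).Nonempty := ⟨p₀, hp₀⟩
  set C : Finset Pt := (Finset.Icc 1 k).image c with hCdef
  have hci : ∀ i, 1 ≤ i → i ≤ k → c i ∈ sky P := by
    intro i h1 h2
    rcases (show i = 1 ∨ i = 2 ∨ 3 ≤ i by omega) with rfl | rfl | h3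
    · rw [hc1]; exact hp₀
    · rw [hc2]; exact hq₀
    · exact hmem i h3 h2
  have hCsub : C ⊆ sky P := by
    intro x hx
    simp only [hCdef, Finset.mem_image, Finset.mem_Icc] at hx
    obtain ⟨i, ⟨h1, h2⟩, rfl⟩ := hx
    exact hci i h1 h2
  have hciC : ∀ i, 1 ≤ i → i ≤ k → c i ∈ C := by
    intro i h1 h2
    exact Finset.mem_image_of_mem c (Finset.mem_Icc.mpr ⟨h1, h2⟩)
  -- farthest point p* achieving psi C P
  obtain ⟨pstar, hpstar, hdelta⟩ := exists_psi C hskyne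
  set δ : ℝ := psi C P with hδdef
  have hδle : ∀ q ∈ C, δ ≤ dist pstar q := by
    intro q hq
    rw [hdelta]
    exact sInf_dist_le hq
  -- optimal Q*
  obtain ⟨Qs, hQs_sub, hQs_ne, hQs_card, hopt⟩ := optk_attained (k := k) hp₀ (by omega)
  have hcover : ∀ p ∈ sky P, ∃ q ∈ Qs, dist p q ≤ optk P k := by
    intro p hp
    obtain ⟨q, hq, hq'⟩ := exists_sInf_dist (p := p) hQs_ne
    exact ⟨q, hq, by rw [← hq', hopt]; exact le_psi hp⟩
  -- the k+1 points
  set x : ℕ → Pt := fun i => if i = 0 then pstar else c i with hxdef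
  have hxsky : ∀ i ∈ Finset.Icc 0 k, x i ∈ sky P := by
    intro i hi
    simp only [Finset.mem_Icc] at hi
    by_cases h0 : i = 0
    · simp [hxdef, h0, hpstar]
    · simp only [hxdef, if_neg h0]
      exact hci i (by omega) hi.2
  -- pairwise separation
  have haux : ∀ i j : ℕ, j < i → i ≤ k → δ ≤ dist (x i) (x j) := by
    intro i j hji hik
    by_cases hj0 : j = 0
    · subst hj0
      have hi0 : ¬ i = 0 := by omega
      simp only [hxdef, if_neg hi0, if_pos rfl]
      rw [dist_comm]
      exact hδle _ (hciC i (by omega) hik)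
    · have hi0 : ¬ i = 0 := by omega
      simp only [hxdef, if_neg hi0, if_neg hj0]
      rcases (show i = 2 ∧ j = 1 ∨ 3 ≤ i by omega) with ⟨rfl, rfl⟩ | h3
      · rw [hc2, hc1]
        calc δ ≤ dist pstar (c 1) := hδle _ (hciC 1 (by omega) (by omega))
        _ ≤ dist p₀ q₀ := by
            rw [hc1]
            exact dist_le_diam hp₀ hp₀min hq₀ hq₀max hpstar hp₀
        _ = dist q₀ p₀ := dist_comm _ _
      · obtain ⟨j₀, hj₀1, hj₀i, hall⟩ := hfarthest i h3 hik pstar hpstar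
        calc δ ≤ dist pstar (c j₀) := hδle _ (hciC j₀ hj₀1 (by omega))
        _ ≤ dist (c i) (c j) := hall j (by omega) hji
  have hpair : ∀ i ∈ Finset.Icc 0 k, ∀ j ∈ Finset.Icc 0 k, i ≠ j →
      δ ≤ dist (x i) (x j) := by
    intro i hi j hj hne
    simp only [Finset.mem_Icc] at hi hj
    rcases lt_or_gt_of_ne hne with h | h
    · rw [dist_comm]; exact haux j i h hj.2
    · exact haux i j h hi.2
  -- pigeonhole
  have hex : ∀ i, ∃ q, i ∈ Finset.Icc 0 k → q ∈ Qs ∧ dist (x i) q ≤ optk P k := by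
    intro i
    by_cases h : i ∈ Finset.Icc 0 k
    · obtain ⟨q, hq, hqd⟩ := hcover _ (hxsky i h)
      exact ⟨q, fun _ => ⟨hq, hqd⟩⟩
    · exact ⟨pstar, fun h' => absurd h' h⟩
  choose f hf using hex
  have hcard : Qs.card < (Finset.Icc 0 k).card := by
    rw [Nat.card_Icc]; omega
  obtain ⟨i, hi, j, hj, hne, heq⟩ :=
    Finset.exists_ne_map_eq_of_card_lt_of_maps_to hcard (fun i hi => (hf i hi).1)
  have h1 := (hf i hi).2
  have h2 := (hf j hj).2
  have ht : dist (x i) (x j) ≤ dist (x i) (f i) + dist (x j) (f j) := by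
    rw [heq, dist_comm (x j) (f j)]
    exact dist_triangle _ _ _
  have := hpair i hi j hj hne
  show δ ≤ 2 * optk P k
  linarith
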